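/- arXiv:1410.4490 — 5 statements merged into one kernel-verified Lean document; each statement's English description precedes it below -/
import Mathlib

section
/- Sphere exchange rule: Let r, R > 0 and fix x, y ∈ ℝ^(k+1) with |x| = r and |y| = R. If g : ℝ → ℂ is integrable on [|R − r|, R + r], then R^k · ∫_{S^k(r)} g(|x₁ − y|) dS_{x₁} = r^k · ∫_{S^k(R)} g(|x − y₁|) dS_{y₁}, where the integrals are over the spheres of radii r and R centered at the origin with respect to the induced surface measure. -/
/-!
Scaling the sphere of radius `c` onto the unit sphere multiplies `μH[k]` by `c ^ k`, so both
sides become `r ^ k * R ^ k` times an integral over the unit sphere, of `g |r z - y|` and of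
`g |x - R z|` respectively. These agree because the reflection `T` exchanging `R x` and `r y`
(vectors of the same length `r R`) preserves the unit sphere with its Hausdorff measure, and
`|r T z - y|² = r² - 2 R ⟪x, z⟫ + R² = |x - R z|²` for unit `z`.
-/

open MeasureTheory Metric
open scoped Pointwise RealInnerProductSpace

section Hausdorff

variable {𝕜 E F : Type*} [NormedField 𝕜] [NormedAddCommGroup E] [NormedSpace 𝕜 E]
  [MeasurableSpace E] [BorelSpace E] [NormedAddCommGroup F] [NormedSpace ℝ F] {d : ℝ}

theorem setIntegral_smul_set_hausdorffMeasure (hd : 0 ≤ d) {c : 𝕜} (hc : c ≠ 0) (s : Set E)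
    (f : E → F) : ∫ x in c • s, f x ∂μH[d] = ‖c‖ ^ d • ∫ x in s, f (c • x) ∂μH[d] := by
  let h : E ≃ᵐ E := (Homeomorph.smulOfNeZero c hc).toMeasurableEquiv
  have hmap : Measure.map h μH[d] = ‖c‖₊⁻¹ ^ d • μH[d] := by
    have hh : ⇑(AffineMap.homothety (0 : E) c) = ⇑h := by
      ext x; simp [h, AffineMap.homothety_apply]
    rw [← hh, map_homothety_hausdorffMeasure hd 0 hc]
  have hpre : h ⁻¹' (c • s) = s := by
    ext x
    simp [h, Set.smul_mem_smul_set_iff₀ hc]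
  have := setIntegral_map_equiv h f (c • s) (μ := μH[d])
  rw [hmap, hpre, Measure.restrict_smul, integral_smul_nnreal_measure] at this
  change _ = ∫ x in s, f (c • x) ∂μH[d] at this
  rw [← this, NNReal.smul_def, smul_smul, NNReal.coe_rpow, NNReal.coe_inv, coe_nnnorm,
    Real.inv_rpow (norm_nonneg c), mul_inv_cancel₀ (by positivity), one_smul]

theorem setIntegral_sphere_eq_smul_unitSphere [NormedSpace ℝ E] (hd : 0 ≤ d) {c : ℝ}
    (hc : 0 < c) (f : E → F) :
    ∫ x in sphere 0 c, f x ∂μH[d] = c ^ d • ∫ x in sphere 0 1, f (c • x) ∂μH[d] := by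
  have hsph : c • sphere (0 : E) 1 = sphere 0 c := by
    rw [smul_sphere' hc.ne', smul_zero, mul_one, Real.norm_of_nonneg hc.le]
  rw [← hsph, setIntegral_smul_set_hausdorffMeasure hd hc.ne', Real.norm_of_nonneg hc.le]

end Hausdorff

theorem LinearIsometryEquiv.setIntegral_sphere_comp {E F : Type*} [NormedAddCommGroup E]
    [NormedSpace ℝ E] [MeasurableSpace E] [BorelSpace E] [NormedAddCommGroup F]
    [NormedSpace ℝ F] (T : E ≃ₗᵢ[ℝ] E) (d s : ℝ) (f : E → F) :
    ∫ z in sphere 0 s, f (T z) ∂μH[d] = ∫ z in sphere 0 s, f z ∂μH[d] := by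
  have := (T.toIsometryEquiv.measurePreserving_hausdorffMeasure d).setIntegral_preimage_emb
    T.toHomeomorph.measurableEmbedding f (sphere 0 s)
  simpa using this

section InnerProduct

variable {E : Type*} [NormedAddCommGroup E] [InnerProductSpace ℝ E]

theorem dist_smul_map_eq_dist_smul (T : E →ₗᵢ[ℝ] E) {x y z : E} {r R : ℝ} (hx : ‖x‖ = r)
    (hy : ‖y‖ = R) (hz : ‖z‖ = 1) (hT : T (R • x) = r • y) :
    dist (r • T z) y = dist x (R • z) := by
  have hr : 0 ≤ r := hx ▸ norm_nonneg x
  have hinner : ⟪r • T z, y⟫ = ⟪x, R • z⟫ := by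
    rw [real_inner_smul_left, ← real_inner_smul_right, ← hT, T.inner_map_map,
      real_inner_smul_right, real_inner_smul_right, real_inner_comm]
  rw [← sq_eq_sq₀ dist_nonneg dist_nonneg, dist_eq_norm, dist_eq_norm, norm_sub_sq_real,
    norm_sub_sq_real, hinner, norm_smul, norm_smul, T.norm_map, hz, hx, hy,
    Real.norm_of_nonneg hr, Real.norm_of_nonneg (hy ▸ norm_nonneg y)]
  ring

theorem exists_linearIsometryEquiv_dist_smul_eq {x y : E} {r R : ℝ} (hx : ‖x‖ = r)
    (hy : ‖y‖ = R) : ∃ T : E ≃ₗᵢ[ℝ] E, ∀ z, ‖z‖ = 1 → dist (r • T z) y = dist x (R • z) := by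
  have hnorm : ‖R • x‖ = ‖r • y‖ := by
    rw [norm_smul, norm_smul, hx, hy, Real.norm_of_nonneg (hy ▸ norm_nonneg y),
      Real.norm_of_nonneg (hx ▸ norm_nonneg x), mul_comm]
  exact ⟨_, fun z hz => dist_smul_map_eq_dist_smul
    (Submodule.reflection (ℝ ∙ (R • x - r • y))ᗮ).toLinearIsometry hx hy hz
    (Submodule.reflection_sub hnorm)⟩

end InnerProduct

theorem stmt3_general (k : ℕ) (r R : ℝ) (hr : 0 < r) (hR : 0 < R)
    (x y : EuclideanSpace ℝ (Fin (k+1))) (hx : ‖x‖ = r) (hy : ‖y‖ = R)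
    (g : ℝ → ℂ) :
    (R : ℂ)^k * ∫ x₁ in sphere (0 : EuclideanSpace ℝ (Fin (k+1))) r,
        g (dist x₁ y) ∂(μH[(k : ℝ)]) =
    (r : ℂ)^k * ∫ y₁ in sphere (0 : EuclideanSpace ℝ (Fin (k+1))) R,
        g (dist x y₁) ∂(μH[(k : ℝ)]) := by
  obtain ⟨T, hT⟩ := exists_linearIsometryEquiv_dist_smul_eq hx hy
  have hunit : ∫ z in sphere 0 1, g (dist (r • z) y) ∂μH[(k : ℝ)] =
      ∫ z in sphere 0 1, g (dist x (R • z)) ∂μH[(k : ℝ)] := by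
    rw [← T.setIntegral_sphere_comp]
    refine setIntegral_congr_fun isClosed_sphere.measurableSet fun z hz => ?_
    rw [hT z (by simpa using hz)]
  rw [setIntegral_sphere_eq_smul_unitSphere k.cast_nonneg hr,
    setIntegral_sphere_eq_smul_unitSphere k.cast_nonneg hR, hunit, Real.rpow_natCast,
    Real.rpow_natCast, Complex.real_smul, Complex.real_smul]
  push_cast
  ring

/-- Sphere exchange rule: for `‖x‖ = r`, `‖y‖ = R` and `g` integrable on `[|R−r|, R+r]`,
`R^k ∫_{S^k(r)} g(|x₁−y|) dS_{x₁} = r^k ∫_{S^k(R)} g(|x−y₁|) dS_{y₁}`, the spheres being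
centered at the origin and carrying the induced (k-dimensional Hausdorff) surface measure. -/
theorem stmt3 (k : ℕ) (r R : ℝ) (hr : 0 < r) (hR : 0 < R)
    (x y : EuclideanSpace ℝ (Fin (k+1))) (hx : ‖x‖ = r) (hy : ‖y‖ = R)
    (g : ℝ → ℂ) (hg : IntegrableOn g (Set.Icc |R - r| (R + r))) :
    (R : ℂ)^k * ∫ x₁ in sphere (0 : EuclideanSpace ℝ (Fin (k+1))) r,
        g (dist x₁ y) ∂(μH[(k : ℝ)]) =
    (r : ℂ)^k * ∫ y₁ in sphere (0 : EuclideanSpace ℝ (Fin (k+1))) R,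
        g (dist x y₁) ∂(μH[(k : ℝ)]) :=
  stmt3_general k r R hr hR x y hx hy g
end

section
/- Let O be the origin of ℝ^(k+1), x fixed with |x| = r < R, y ∈ S^k(R), ψ = ∠Oxy, and θ = π − ∠xOy. With q = |x−y| and l = |x−y*| as above, the change of variables between θ and ψ satisfies dθ/dψ = 2q/(l+q); equivalently r sin ψ = R sin(θ − ψ) implicitly defines θ(ψ), and differentiating gives dθ = (2q/(l+q)) dψ. -/
open Real

/-!
On `[0, π]` the branch condition forces `θ ψ = ψ + arcsin (r sin ψ / R)`, so `θ` is explicitly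
differentiable, with derivative `1 + r cos ψ / √(R² - r² sin² ψ)`. Since `l + q = 2√(R² - r² sin² ψ)`,
this is `2q / (l + q)`.
-/
lemma eq_add_arcsin_of_mul_sin_eq {r R ψ θ : ℝ} (hR : R ≠ 0)
    (h : r * sin ψ = R * sin (θ - ψ)) (hbranch : θ - ψ ∈ Set.Icc (-(π / 2)) (π / 2)) :
    θ = ψ + arcsin (r * sin ψ / R) := by
  rw [h, mul_div_cancel_left₀ _ hR, arcsin_sin hbranch.1 hbranch.2]
  ring

lemma abs_mul_sin_lt {r R : ℝ} (hrR : |r| < R) (ψ : ℝ) : |r * sin ψ| < R := by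
  rw [abs_mul]
  exact (mul_le_of_le_one_right (abs_nonneg r) (abs_sin_le_one ψ)).trans_lt hrR

lemma sq_mul_sin_sq_lt {r R : ℝ} (hrR : |r| < R) (ψ : ℝ) : r ^ 2 * sin ψ ^ 2 < R ^ 2 := by
  rw [← mul_pow, ← sq_abs]
  exact pow_lt_pow_left₀ (abs_mul_sin_lt hrR ψ) (abs_nonneg _) two_ne_zero

lemma sqrt_sq_sub_sq_mul_sin_sq_pos {r R : ℝ} (hrR : |r| < R) (ψ : ℝ) :
    0 < √(R ^ 2 - r ^ 2 * sin ψ ^ 2) :=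
  sqrt_pos.2 (sub_pos.2 (sq_mul_sin_sq_lt hrR ψ))

lemma sqrt_one_sub_div_sq {R a : ℝ} (hR : 0 < R) :
    √(1 - (a / R) ^ 2) = √(R ^ 2 - a ^ 2) / R := by
  rw [show 1 - (a / R) ^ 2 = (R ^ 2 - a ^ 2) / R ^ 2 by field_simp, sqrt_div' _ (sq_nonneg R),
    sqrt_sq hR.le]

lemma hasDerivAt_add_arcsin_mul_sin_div {r R : ℝ} (hrR : |r| < R) (ψ : ℝ) :
    HasDerivAt (fun t => t + arcsin (r * sin t / R))
      (1 + r * cos ψ / √(R ^ 2 - r ^ 2 * sin ψ ^ 2)) ψ := by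
  have hR : 0 < R := (abs_nonneg r).trans_lt hrR
  have hlt : |r * sin ψ / R| < 1 := by
    rw [abs_div, abs_of_pos hR, div_lt_one hR]
    exact abs_mul_sin_lt hrR ψ
  have hsin : HasDerivAt (fun t => r * sin t / R) (r * cos ψ / R) ψ :=
    ((hasDerivAt_sin ψ).const_mul r).div_const R
  have harcsin := (hasDerivAt_arcsin (abs_lt.1 hlt).1.ne' (abs_lt.1 hlt).2.ne).comp ψ hsin
  refine ((hasDerivAt_id ψ).add harcsin).congr_deriv ?_
  have hpos := (sqrt_sq_sub_sq_mul_sin_sq_pos hrR ψ).ne'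
  rw [sqrt_one_sub_div_sq hR, mul_pow]
  field_simp

theorem stmt7_general (r R : ℝ) (hr : 0 < r) (hrR : r < R) (θ : ℝ → ℝ)
    (hθ : ∀ ψ ∈ Set.Icc 0 π, r * Real.sin ψ = R * Real.sin (θ ψ - ψ))
    (hθ' : ∀ ψ ∈ Set.Icc 0 π, θ ψ - ψ ∈ Set.Icc (-(π/2)) (π/2)) :
    ∀ ψ ∈ Set.Ioo 0 π,
      let q : ℝ := r * Real.cos ψ + Real.sqrt (R^2 - r^2 * Real.sin ψ^2)
      let l : ℝ := Real.sqrt (R^2 - r^2 * Real.sin ψ^2) - r * Real.cos ψ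
      HasDerivAt θ (2 * q / (l + q)) ψ := by
  intro ψ hψ q l
  have habs : |r| < R := (abs_of_pos hr).trans_lt hrR
  have hθ_eq : θ =ᶠ[nhds ψ] fun t => t + arcsin (r * sin t / R) := by
    filter_upwards [isOpen_Ioo.mem_nhds hψ] with t ht
    have ht' := Set.Ioo_subset_Icc_self ht
    exact eq_add_arcsin_of_mul_sin_eq (hr.trans hrR).ne' (hθ t ht') (hθ' t ht')
  refine ((hasDerivAt_add_arcsin_mul_sin_div habs ψ).congr_of_eventuallyEq hθ_eq).congr_deriv ?_
  have hs := (sqrt_sq_sub_sq_mul_sin_sq_pos habs ψ).ne'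
  simp only [q, l]
  generalize √(R ^ 2 - r ^ 2 * sin ψ ^ 2) = s at hs ⊢
  rw [show s - r * cos ψ + (r * cos ψ + s) = 2 * s by ring]
  field_simp
  ring

/-- θ–ψ exchange: with `0 < r < R`, the relation `r sin ψ = R sin(θ(ψ) − ψ)` (with
`θ(ψ) − ψ ∈ [−π/2, π/2]`) implicitly defines `θ(ψ)`, and differentiating gives
`dθ/dψ = 2q/(l+q)`, where `q(ψ) = r cos ψ + √(R² − r² sin² ψ)` and
`l(ψ) = √(R² − r² sin² ψ) − r cos ψ` are the chord distances `‖x−y‖`, `‖x−y*‖`. -/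
theorem stmt7 (r R : ℝ) (hr : 0 < r) (hrR : r < R) (θ : ℝ → ℝ)
    (hθ : ∀ ψ ∈ Set.Icc 0 π, r * Real.sin ψ = R * Real.sin (θ ψ - ψ))
    (hθ' : ∀ ψ ∈ Set.Icc 0 π, θ ψ - ψ ∈ Set.Icc (-(π/2)) (π/2))
    (hθd : ∀ ψ ∈ Set.Ioo 0 π, DifferentiableAt ℝ θ ψ) :
    ∀ ψ ∈ Set.Ioo 0 π,
      let q : ℝ := r * Real.cos ψ + Real.sqrt (R^2 - r^2 * Real.sin ψ^2)
      let l : ℝ := Real.sqrt (R^2 - r^2 * Real.sin ψ^2) - r * Real.cos ψ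
      HasDerivAt θ (2 * q / (l + q)) ψ :=
  stmt7_general r R hr hrR θ hθ hθ'
end

section
/- Let α, β ∈ ℂ with α + β = k, let 0 < η < ρ, fix u ∈ S^k(ρ), and let ω(m,u) = (ρ² − η²)/|u − m|² for m ∈ S^k(η). Then ∫_{S^k(η)} ω^α(m,u) dS_m = ∫_{S^k(η)} ω^β(m,u) dS_m. -/
/-!
Let `T` be the inversion in the sphere about `u` of radius `R = √(ρ² - η²)`. This sphere is
orthogonal to `S^k(η)`, so `T` is an involution of `S^k(η)`, and on it `ω ∘ T = ω⁻¹`, where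
`ω m = R² / ‖m - u‖²` is exactly the factor by which `T` scales distances near `m`:
`dist (T x) (T y) = √(ω x * ω y) * dist x y`. Hence `T` pushes `μH[k]` on the sphere forward to
the measure with density `ω ^ k`, and
`∫ ω^α = ∫ (ω ∘ T)^(-α) = ∫ ω^k * ω^(-α) = ∫ ω^β`.

The density is obtained without differentiating `T`: on a set where `ω` varies by a factor at most
`q`, the Lipschitz bounds for `T` and for `T⁻¹ = T` compare both measures up to `q ^ k`, and
`q → 1`.
-/

open MeasureTheory Metric Set Filter EuclideanGeometry
open scoped Topology

namespace MeasureTheory.Measure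

variable {X : Type*} [MeasurableSpace X]

theorem le_of_le_rpow_mul_on_shells {ν μ : Measure X} {f : X → ℝ} (hf : Measurable f)
    (hν : ∀ᵐ x ∂ν, 0 < f x) {d : ℝ}
    (h : ∀ q > 1, ∀ a > 0, ∀ A, MeasurableSet A → A ⊆ f ⁻¹' Ico a (q * a) →
      ν A ≤ ENNReal.ofReal (q ^ d) * μ A) : ν ≤ μ := by
  refine le_intro fun A hA _ => ?_
  have hshell : ∀ q > 1, ν A ≤ ENNReal.ofReal (q ^ d) * μ A := by
    intro q hq
    set B : ℤ → Set X := fun n => A ∩ f ⁻¹' Ico (q ^ n) (q ^ (n + 1))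
    have hB : ∀ n, MeasurableSet (B n) := fun n => hA.inter (hf measurableSet_Ico)
    have hdisj : Pairwise (Function.onFun Disjoint B) := by
      refine fun m n hmn => Set.disjoint_left.2 fun x hxm hxn => hmn ?_
      have h₁ := hxm.2.1.trans_lt hxn.2.2
      have h₂ := hxn.2.1.trans_lt hxm.2.2
      rw [zpow_lt_zpow_iff_right₀ hq] at h₁ h₂
      omega
    have hcover : A ∩ {x | 0 < f x} = ⋃ n, B n := by
      ext x
      simp only [B, mem_inter_iff, mem_ofPred_eq, mem_iUnion, mem_preimage, exists_and_left]
      refine and_congr_right fun _ => ⟨fun hx => exists_mem_Ico_zpow hx hq, ?_⟩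
      rintro ⟨n, hn, -⟩
      exact (zpow_pos (by linarith) n).trans_le hn
    calc ν A = ν (A ∩ {x | 0 < f x}) := (measure_inter_conull hν).symm
      _ = ∑' n, ν (B n) := by rw [hcover, measure_iUnion hdisj hB]
      _ ≤ ∑' n, ENNReal.ofReal (q ^ d) * μ (B n) := by
        refine ENNReal.tsum_le_tsum fun n => h q hq (q ^ n) (zpow_pos (by linarith) n) _ (hB n) ?_
        rw [← zpow_one_add₀ (by positivity), add_comm]
        exact inter_subset_right
      _ = ENNReal.ofReal (q ^ d) * μ (⋃ n, B n) := by
        rw [ENNReal.tsum_mul_left, measure_iUnion hdisj hB]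
      _ ≤ ENNReal.ofReal (q ^ d) * μ A := by
        gcongr
        exact iUnion_subset fun n => inter_subset_left
  have hlim : Tendsto (fun q : ℝ => ENNReal.ofReal (q ^ d) * μ A) (𝓝[>] 1) (𝓝 (μ A)) := by
    have := (Real.continuousAt_rpow_const 1 d (Or.inl one_ne_zero)).tendsto
    have hcont : Tendsto (fun q : ℝ => ENNReal.ofReal (q ^ d)) (𝓝[>] 1) (𝓝 1) := by
      simpa using (ENNReal.tendsto_ofReal this).mono_left nhdsWithin_le_nhds
    simpa using ENNReal.Tendsto.mul_const hcont (Or.inl one_ne_zero)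
  exact ge_of_tendsto hlim (eventually_nhdsWithin_of_forall hshell)

theorem map_restrict_apply_of_leftInvOn {T : X → X} {μ : Measure X} {S A : Set X}
    (hT : Measurable T) (hTS : MapsTo T S S) (hTT : LeftInvOn T T S) (hA : MeasurableSet A) :
    (μ.restrict S).map T A = μ (T '' (A ∩ S)) := by
  rw [Measure.map_apply hT hA, Measure.restrict_apply (hT hA), hTT.image_inter',
    (InvOn.bijOn ⟨hTT, hTT⟩ hTS hTS).image_eq]

end MeasureTheory.Measure

namespace MeasureTheory

variable {X : Type*} [MetricSpace X] [MeasurableSpace X] [BorelSpace X]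
  {T : X → X} {g : X → ℝ}

theorem hausdorffMeasure_image_le_of_dist_le_sqrt_mul {d : ℝ} (hd : 0 ≤ d) {B : Set X}
    (hdist : ∀ x ∈ B, ∀ y ∈ B, dist (T x) (T y) ≤ √(g x * g y) * dist x y)
    {c : ℝ} (hc : 0 ≤ c) (hg : ∀ x ∈ B, 0 ≤ g x ∧ g x ≤ c) :
    μH[d] (T '' B) ≤ ENNReal.ofReal (c ^ d) * μH[d] B := by
  have hlip : LipschitzOnWith c.toNNReal T B := by
    refine LipschitzOnWith.of_dist_le_mul fun x hx y hy => (hdist x hx y hy).trans ?_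
    rw [Real.coe_toNNReal c hc]
    gcongr
    calc √(g x * g y) ≤ √(c * c) :=
          Real.sqrt_le_sqrt (mul_le_mul (hg x hx).2 (hg y hy).2 (hg y hy).1 hc)
      _ = c := Real.sqrt_mul_self hc
  rw [← ENNReal.ofReal_rpow_of_nonneg hc hd]
  exact hlip.hausdorffMeasure_image_le hd

theorem hausdorffMeasure_image_le_rpow_mul_setLIntegral {d : ℝ} (hd : 0 ≤ d) {B : Set X}
    (hB : MeasurableSet B)
    (hdist : ∀ x ∈ B, ∀ y ∈ B, dist (T x) (T y) ≤ √(g x * g y) * dist x y)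
    {a q : ℝ} (ha : 0 < a) (hq : 0 ≤ q) (hg : ∀ x ∈ B, g x ∈ Icc a (q * a)) :
    μH[d] (T '' B) ≤
      ENNReal.ofReal (q ^ d) * ∫⁻ x in B, ENNReal.ofReal (g x ^ d) ∂μH[d] :=
  calc μH[d] (T '' B) ≤ ENNReal.ofReal ((q * a) ^ d) * μH[d] B :=
        hausdorffMeasure_image_le_of_dist_le_sqrt_mul hd hdist (by positivity)
          fun x hx => ⟨ha.le.trans (hg x hx).1, (hg x hx).2⟩
    _ = ENNReal.ofReal (q ^ d) * ∫⁻ _ in B, ENNReal.ofReal (a ^ d) ∂μH[d] := by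
        rw [setLIntegral_const, Real.mul_rpow hq ha.le, ENNReal.ofReal_mul (by positivity),
          mul_assoc]
    _ ≤ _ := by
        gcongr ENNReal.ofReal (q ^ d) * ?_
        exact setLIntegral_mono' hB fun x hx =>
          ENNReal.ofReal_le_ofReal (Real.rpow_le_rpow ha.le (hg x hx).1 hd)

theorem setLIntegral_le_rpow_mul_hausdorffMeasure_image {d : ℝ} (hd : 0 ≤ d) {S B : Set X}
    (hB : MeasurableSet B) (hBS : B ⊆ S) (hTS : MapsTo T S S) (hTT : LeftInvOn T T S)
    (hgT : ∀ x ∈ S, g (T x) = (g x)⁻¹)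
    (hdist : ∀ x ∈ S, ∀ y ∈ S, dist (T x) (T y) ≤ √(g x * g y) * dist x y)
    {a q : ℝ} (ha : 0 < a) (hq : 0 ≤ q) (hg : ∀ x ∈ B, g x ∈ Icc a (q * a)) :
    ∫⁻ x in B, ENNReal.ofReal (g x ^ d) ∂μH[d] ≤
      ENNReal.ofReal (q ^ d) * μH[d] (T '' B) :=
  calc ∫⁻ x in B, ENNReal.ofReal (g x ^ d) ∂μH[d]
      ≤ ∫⁻ _ in B, ENNReal.ofReal ((q * a) ^ d) ∂μH[d] :=
        setLIntegral_mono' hB fun x hx => ENNReal.ofReal_le_ofReal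
          (Real.rpow_le_rpow (ha.le.trans (hg x hx).1) (hg x hx).2 hd)
    _ = ENNReal.ofReal ((q * a) ^ d) * μH[d] (T '' (T '' B)) := by
        rw [setLIntegral_const, hTT.image_image' hBS]
    _ ≤ ENNReal.ofReal ((q * a) ^ d) * (ENNReal.ofReal (a⁻¹ ^ d) * μH[d] (T '' B)) := by
        gcongr
        refine hausdorffMeasure_image_le_of_dist_le_sqrt_mul (g := g) hd ?_ (inv_nonneg.2 ha.le) ?_
        · rintro _ ⟨x, hx, rfl⟩ _ ⟨y, hy, rfl⟩
          exact hdist _ (hTS (hBS hx)) _ (hTS (hBS hy))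
        · rintro _ ⟨x, hx, rfl⟩
          rw [hgT x (hBS hx)]
          exact ⟨inv_nonneg.2 (ha.le.trans (hg x hx).1), inv_anti₀ ha (hg x hx).1⟩
    _ = ENNReal.ofReal (q ^ d) * μH[d] (T '' B) := by
        rw [← mul_assoc, ← ENNReal.ofReal_mul (by positivity),
          ← Real.mul_rpow (by positivity) (by positivity), mul_inv_cancel_right₀ ha.ne']

theorem map_restrict_hausdorffMeasure_eq_withDensity {d : ℝ} (hd : 0 ≤ d) {S : Set X}
    (hS : MeasurableSet S) (hT : Measurable T) (hg : Measurable g)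
    (hTS : MapsTo T S S) (hTT : LeftInvOn T T S)
    (hg_pos : ∀ x ∈ S, 0 < g x) (hgT : ∀ x ∈ S, g (T x) = (g x)⁻¹)
    (hdist : ∀ x ∈ S, ∀ y ∈ S, dist (T x) (T y) ≤ √(g x * g y) * dist x y) :
    (μH[d].restrict S).map T =
      (μH[d].restrict S).withDensity fun x => ENNReal.ofReal (g x ^ d) := by
  have hpos_map : ∀ᵐ x ∂(μH[d].restrict S).map T, 0 < g x :=
    (ae_map_iff hT.aemeasurable (measurableSet_lt measurable_const hg)).2
      (ae_restrict_of_forall_mem hS fun x hx => hg_pos _ (hTS hx))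
  have hpos_dens : ∀ᵐ x ∂(μH[d].restrict S).withDensity fun x => ENNReal.ofReal (g x ^ d),
      0 < g x :=
    (withDensity_absolutelyContinuous _ _).ae_le (ae_restrict_of_forall_mem hS hg_pos)
  refine le_antisymm (Measure.le_of_le_rpow_mul_on_shells (d := d) hg hpos_map ?_)
    (Measure.le_of_le_rpow_mul_on_shells (d := d) hg hpos_dens ?_) <;>
  intro q hq a ha A hA hAg <;>
  rw [Measure.map_restrict_apply_of_leftInvOn hT hTS hTT hA, withDensity_apply _ hA,
    Measure.restrict_restrict hA]
  · exact hausdorffMeasure_image_le_rpow_mul_setLIntegral hd (hA.inter hS)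
      (fun x hx y hy => hdist x hx.2 y hy.2) ha (by positivity)
      fun x hx => Ico_subset_Icc_self (hAg hx.1)
  · exact setLIntegral_le_rpow_mul_hausdorffMeasure_image hd (hA.inter hS) inter_subset_right
      hTS hTT hgT hdist ha (by positivity) fun x hx => Ico_subset_Icc_self (hAg hx.1)

end MeasureTheory

namespace EuclideanGeometry

section AffineSpace

variable {V P : Type*} [NormedAddCommGroup V] [InnerProductSpace ℝ V] [MetricSpace P]
  [NormedAddTorsor V P] {c x y : P}

theorem dist_inversion_inversion_eq_sqrt_mul (hx : x ≠ c) (hy : y ≠ c) (R : ℝ) :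
    dist (inversion c R x) (inversion c R y) =
      √(R ^ 2 / dist x c ^ 2 * (R ^ 2 / dist y c ^ 2)) * dist x y := by
  rw [dist_inversion_inversion hx hy,
    ← Real.sqrt_sq (by positivity : 0 ≤ R ^ 2 / (dist x c * dist y c))]
  congr 2
  ring

theorem div_sq_dist_inversion_center (c x : P) (R : ℝ) :
    R ^ 2 / dist (inversion c R x) c ^ 2 = (R ^ 2 / dist x c ^ 2)⁻¹ := by
  rw [dist_inversion_center]
  rcases eq_or_ne R 0 with rfl | hR
  · simp
  rcases eq_or_ne (dist x c) 0 with hxc | hxc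
  · simp [hxc]
  field_simp

end AffineSpace

variable {E : Type*} [NormedAddCommGroup E] [InnerProductSpace ℝ E] {c : E} {η R : ℝ}

theorem mapsTo_inversion_sphere_zero (hc : ‖c‖ ^ 2 = η ^ 2 + R ^ 2) :
    MapsTo (inversion c R) (sphere 0 η) (sphere 0 η) := by
  intro x hx
  rw [mem_sphere_zero_iff_norm] at hx ⊢
  rcases eq_or_ne x c with rfl | hxc
  · rwa [inversion_self]
  have hD : ‖x - c‖ ≠ 0 := norm_ne_zero_iff.2 (sub_ne_zero.2 hxc)
  have hsq : ‖inversion c R x‖ ^ 2 = η ^ 2 := by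
    have hxc2 : ‖x - c‖ ^ 2 = η ^ 2 - 2 * inner ℝ c x + ‖c‖ ^ 2 := by
      rw [norm_sub_sq_real, hx, real_inner_comm]
    rw [inversion, vsub_eq_sub, vadd_eq_add, dist_eq_norm, norm_add_sq_real, norm_smul,
      real_inner_smul_left, inner_sub_left, real_inner_self_eq_norm_sq, real_inner_comm,
      Real.norm_of_nonneg (by positivity)]
    field_simp
    linear_combination R ^ 2 * hxc2 + (‖x - c‖ ^ 2 - R ^ 2) * hc
  exact (sq_eq_sq₀ (norm_nonneg _) (hx ▸ norm_nonneg x)).1 hsq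

theorem measurable_inversion [MeasurableSpace E] [BorelSpace E] (c : E) (R : ℝ) :
    Measurable (inversion c R) := by
  unfold inversion
  fun_prop

theorem setIntegral_sphere_comp_inversion [MeasurableSpace E] [BorelSpace E]
    {F : Type*} [NormedAddCommGroup F] [NormedSpace ℝ F]
    (hR : R ≠ 0) (hc : ‖c‖ ^ 2 = η ^ 2 + R ^ 2) {d : ℝ} (hd : 0 ≤ d) (f : E → F) :
    ∫ x in sphere 0 η, f (inversion c R x) ∂μH[d] =
      ∫ x in sphere 0 η, (R ^ 2 / dist x c ^ 2) ^ d • f x ∂μH[d] := by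
  have hne : ∀ x ∈ sphere (0 : E) η, x ≠ c := by
    rintro x hx rfl
    rw [mem_sphere_zero_iff_norm] at hx
    exact hR (pow_eq_zero_iff two_ne_zero |>.1 (by rw [hx] at hc; linarith))
  have hg : Measurable fun x : E => R ^ 2 / dist x c ^ 2 := by fun_prop
  have hmap := map_restrict_hausdorffMeasure_eq_withDensity hd isClosed_sphere.measurableSet
    (measurable_inversion c R) hg (mapsTo_inversion_sphere_zero hc)
    (fun x _ => inversion_inversion c hR x)
    (fun x hx => by have := dist_pos.2 (hne x hx); positivity)
    (fun x _ => div_sq_dist_inversion_center c x R)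
    (fun x hx y hy => (dist_inversion_inversion_eq_sqrt_mul (hne x hx) (hne y hy) R).le)
  have hcov : ∫ x, f x ∂(μH[d].restrict (sphere 0 η)).map (inversion c R) =
      ∫ x in sphere 0 η, f (inversion c R x) ∂μH[d] :=
    integral_map_equiv (MeasurableEquiv.ofInvolutive _ (inversion_involutive c hR)
      (measurable_inversion c R)) f
  rw [← hcov, hmap,
    integral_withDensity_eq_integral_toReal_smul (by fun_prop)
      (ae_of_all _ fun _ => ENNReal.ofReal_lt_top)]
  congr with x
  rw [ENNReal.toReal_ofReal (by positivity)]

end EuclideanGeometry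

namespace Complex

theorem ofReal_inv_cpow_neg {r : ℝ} (hr : 0 ≤ r) (γ : ℂ) :
    ((r⁻¹ : ℝ) : ℂ) ^ (-γ) = (r : ℂ) ^ γ := by
  rw [ofReal_inv, inv_cpow _ _ (by rw [arg_ofReal_of_nonneg hr]; exact Real.pi_ne_zero.symm),
    cpow_neg, inv_inv]

theorem rpow_smul_ofReal_cpow {r : ℝ} (hr : 0 < r) (s : ℝ) (γ : ℂ) :
    r ^ s • (r : ℂ) ^ γ = (r : ℂ) ^ (s + γ) := by
  rw [real_smul, ofReal_cpow hr.le, cpow_add _ _ (ofReal_ne_zero.2 hr.ne')]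

end Complex

/-- If `α + β = k`, `0 < η < ρ`, `u` fixed on the sphere of radius `ρ`, and
`ω(m,u) = (ρ² − η²)/‖u−m‖²` for `m` on the sphere of radius `η`, then
`∫_{S^k(η)} ω^α dS_m = ∫_{S^k(η)} ω^β dS_m`. -/
theorem stmt14 (k : ℕ) (ρ η : ℝ) (hη : 0 < η) (hηρ : η < ρ)
    (α β : ℂ) (hαβ : α + β = (k : ℂ))
    (u : EuclideanSpace ℝ (Fin (k+1))) (hu : ‖u‖ = ρ) :
    (∫ m in sphere (0 : EuclideanSpace ℝ (Fin (k+1))) η,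
        (((ρ^2 - η^2) / ‖u - m‖^2 : ℝ) : ℂ) ^ α ∂(μH[(k : ℝ)])) =
    ∫ m in sphere (0 : EuclideanSpace ℝ (Fin (k+1))) η,
        (((ρ^2 - η^2) / ‖u - m‖^2 : ℝ) : ℂ) ^ β ∂(μH[(k : ℝ)]) := by
  have hr : 0 < ρ ^ 2 - η ^ 2 := by nlinarith
  set R := √(ρ ^ 2 - η ^ 2)
  have hR : 0 < R := Real.sqrt_pos.2 hr
  have hR2 : R ^ 2 = ρ ^ 2 - η ^ 2 := Real.sq_sqrt hr.le
  have hu' : ‖u‖ ^ 2 = η ^ 2 + R ^ 2 := by rw [hu, hR2]; ring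
  have hω_pos : ∀ m ∈ sphere 0 η, 0 < R ^ 2 / dist m u ^ 2 := fun m hm => by
    have : m ≠ u := by rintro rfl; rw [mem_sphere_zero_iff_norm, hu] at hm; linarith
    have := dist_pos.2 this
    positivity
  simp_rw [← hR2, norm_sub_rev u, ← dist_eq_norm]
  calc _ = ∫ m in sphere 0 η,
          ((R ^ 2 / dist (inversion u R m) u ^ 2 : ℝ) : ℂ) ^ (-α) ∂μH[(k:ℝ)] := by
        congr with m
        rw [div_sq_dist_inversion_center, Complex.ofReal_inv_cpow_neg (by positivity)]
    _ = ∫ m in sphere 0 η, (R ^ 2 / dist m u ^ 2) ^ (k : ℝ) •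
          ((R ^ 2 / dist m u ^ 2 : ℝ) : ℂ) ^ (-α) ∂μH[(k:ℝ)] :=
        setIntegral_sphere_comp_inversion hR.ne' hu' k.cast_nonneg
          fun m => ((R ^ 2 / dist m u ^ 2 : ℝ) : ℂ) ^ (-α)
    _ = _ := by
        refine setIntegral_congr_fun isClosed_sphere.measurableSet fun m hm => ?_
        rw [Complex.rpow_smul_ofReal_cpow (hω_pos m hm)]
        congr 1
        push_cast
        linear_combination -hαβ
end

section
/- Radial eigenfunction positivity for small b: Let k ≥ 1, 0 < δ_E < ρ, b real with |b| · ln((ρ+δ_E)/(ρ−δ_E)) ≤ π/2. Then for every η ∈ [0, δ_E], the integral ∫_0^{π/2} (sin^{k−1} ψ/(l+q)) cos(b ln(l/q)) dψ is strictly positive, where for each ψ, l = l(η,ψ) and q = q(η,ψ) are the distances from a point x with |x| = η to the two intersection points of the ray from x at angle ψ (to the ray toward the origin) with the sphere S^k(ρ), with q ≥ l and lq = ρ² − η². -/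
open Real

/-- Positivity of the radial eigenfunction integral for small `b`: let `k ≥ 1`,
`0 < δ_E < ρ`, and `b` real with `|b| ln((ρ+δ_E)/(ρ−δ_E)) ≤ π/2`. For `η ∈ [0, δ_E]`
and `ψ ∈ [0, π/2]`, let `q = η cos ψ + √(ρ² − η² sin² ψ)` and
`l = √(ρ² − η² sin² ψ) − η cos ψ` be the distances from a point at distance `η` from the
origin to the two intersections of the corresponding line with the sphere `S^k(ρ)`
(so `q ≥ l` and `l q = ρ² − η²`). Then
`∫_0^{π/2} sin^{k−1} ψ/(l+q) · cos(b ln(l/q)) dψ > 0`. -/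
theorem stmt18 (k : ℕ) (hk : 1 ≤ k) (ρ δE : ℝ) (hδE : 0 < δE) (hδEρ : δE < ρ)
    (b : ℝ) (hb : |b| * Real.log ((ρ + δE)/(ρ - δE)) ≤ π/2) :
    ∀ η ∈ Set.Icc 0 δE,
      0 < ∫ ψ in (0:ℝ)..(π/2),
        (Real.sin ψ)^(k-1) /
            ((Real.sqrt (ρ^2 - η^2 * Real.sin ψ^2) - η * Real.cos ψ) +
             (η * Real.cos ψ + Real.sqrt (ρ^2 - η^2 * Real.sin ψ^2))) *
          Real.cos (b * Real.log
            ((Real.sqrt (ρ^2 - η^2 * Real.sin ψ^2) - η * Real.cos ψ) /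
             (η * Real.cos ψ + Real.sqrt (ρ^2 - η^2 * Real.sin ψ^2)))) := by
  rintro η ⟨hη0, hηδ⟩
  have hρ : 0 < ρ := hδE.trans hδEρ
  have hηρ : η < ρ := lt_of_le_of_lt hηδ hδEρ
  -- basic facts valid for all ψ
  have hA : ∀ ψ : ℝ, 0 < ρ^2 - η^2 * Real.sin ψ^2 := by
    intro ψ
    nlinarith [Real.sin_sq_le_one ψ, sq_nonneg (Real.sin ψ), sq_nonneg η]
  have hs : ∀ ψ : ℝ, 0 < Real.sqrt (ρ^2 - η^2 * Real.sin ψ^2) :=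
    fun ψ => Real.sqrt_pos.mpr (hA ψ)
  have hsq : ∀ ψ : ℝ, (Real.sqrt (ρ^2 - η^2 * Real.sin ψ^2))^2 = ρ^2 - η^2 * Real.sin ψ^2 :=
    fun ψ => Real.sq_sqrt (hA ψ).le
  -- on [0, π/2]: η cos ψ < √A, so l > 0 and q > 0
  have hl : ∀ ψ ∈ Set.Icc (0:ℝ) (π/2),
      η * Real.cos ψ < Real.sqrt (ρ^2 - η^2 * Real.sin ψ^2) := by
    rintro ψ ⟨h0, h1⟩
    have hcos : 0 ≤ Real.cos ψ := Real.cos_nonneg_of_mem_Icc ⟨by linarith [Real.pi_pos], h1⟩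
    have hsc := Real.sin_sq_add_cos_sq ψ
    nlinarith [hs ψ, hsq ψ, mul_nonneg hη0 hcos, sq_nonneg (Real.sin ψ)]
  have hq : ∀ ψ ∈ Set.Icc (0:ℝ) (π/2),
      0 < η * Real.cos ψ + Real.sqrt (ρ^2 - η^2 * Real.sin ψ^2) := by
    rintro ψ ⟨h0, h1⟩
    have hcos : 0 ≤ Real.cos ψ := Real.cos_nonneg_of_mem_Icc ⟨by linarith [Real.pi_pos], h1⟩
    have := hs ψ
    positivity
  have hlq : ∀ ψ ∈ Set.Icc (0:ℝ) (π/2),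
      0 < (Real.sqrt (ρ^2 - η^2 * Real.sin ψ^2) - η * Real.cos ψ) /
          (η * Real.cos ψ + Real.sqrt (ρ^2 - η^2 * Real.sin ψ^2)) := by
    intro ψ hψ
    exact div_pos (by linarith [hl ψ hψ]) (hq ψ hψ)
  have hpi2 : (0:ℝ) < π/2 := by positivity
  apply intervalIntegral.intervalIntegral_pos_of_pos_on
  · -- interval integrability via continuity on [0, π/2]
    apply ContinuousOn.intervalIntegrable
    rw [Set.uIcc_of_le hpi2.le]
    have hcontA : Continuous fun ψ : ℝ => ρ^2 - η^2 * Real.sin ψ^2 := by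
      continuity
    have hconts : Continuous fun ψ : ℝ => Real.sqrt (ρ^2 - η^2 * Real.sin ψ^2) :=
      hcontA.sqrt
    have hcontl : Continuous fun ψ : ℝ =>
        Real.sqrt (ρ^2 - η^2 * Real.sin ψ^2) - η * Real.cos ψ := by
      exact hconts.sub (continuous_const.mul Real.continuous_cos)
    have hcontq : Continuous fun ψ : ℝ =>
        η * Real.cos ψ + Real.sqrt (ρ^2 - η^2 * Real.sin ψ^2) := by
      exact (continuous_const.mul Real.continuous_cos).add hconts
    apply ContinuousOn.mul
    · apply ContinuousOn.div
      · exact (Real.continuous_sin.pow _).continuousOn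
      · exact (hcontl.add hcontq).continuousOn
      · intro ψ hψ
        have := hl ψ hψ
        have := hq ψ hψ
        linarith
    · apply Real.continuous_cos.comp_continuousOn
      apply ContinuousOn.mul continuousOn_const
      apply ContinuousOn.log
      · exact (hcontl.continuousOn.div hcontq.continuousOn
          (fun ψ hψ => (hq ψ hψ).ne'))
      · intro ψ hψ
        exact (hlq ψ hψ).ne'
  · -- pointwise positivity on (0, π/2)
    rintro ψ ⟨h0, h1⟩
    have hψIcc : ψ ∈ Set.Icc (0:ℝ) (π/2) := ⟨h0.le, h1.le⟩
    have hsin : 0 < Real.sin ψ := Real.sin_pos_of_pos_of_lt_pi h0 (by linarith [Real.pi_pos])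
    have hcos : 0 ≤ Real.cos ψ := Real.cos_nonneg_of_mem_Icc ⟨by linarith [Real.pi_pos], h1.le⟩
    set s := Real.sqrt (ρ^2 - η^2 * Real.sin ψ^2) with hsdef
    have hls : η * Real.cos ψ < s := hl ψ hψIcc
    have hqs : 0 < η * Real.cos ψ + s := hq ψ hψIcc
    have hlpos : 0 < s - η * Real.cos ψ := by linarith
    apply mul_pos
    · exact div_pos (pow_pos hsin _) (by linarith)
    · -- cos of a small angle is positive
      apply Real.cos_pos_of_mem_Ioo
      rw [Set.mem_Ioo, ← abs_lt]
      -- key: q/l < (ρ+δE)/(ρ-δE)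
      have hR : 0 < Real.log ((ρ + δE)/(ρ - δE)) := by
        apply Real.log_pos
        rw [lt_div_iff₀ (by linarith)]
        linarith
      have hkey : (η * Real.cos ψ + s) / (s - η * Real.cos ψ) < (ρ + δE)/(ρ - δE) := by
        rw [div_lt_div_iff₀ hlpos (by linarith)]
        have hρc : ρ * Real.cos ψ < s := by
          have hsc := Real.sin_sq_add_cos_sq ψ
          rw [hsdef, Real.lt_sqrt (mul_nonneg hρ.le hcos)]
          nlinarith [mul_pos (show (0:ℝ) < ρ^2 - η^2 by nlinarith) (mul_pos hsin hsin)]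
        nlinarith [mul_le_mul_of_nonneg_right hηδ (mul_nonneg hρ.le hcos),
          mul_lt_mul_of_pos_left hρc hδE]
      have hlogle : Real.log ((η * Real.cos ψ + s) / (s - η * Real.cos ψ)) <
          Real.log ((ρ + δE)/(ρ - δE)) :=
        Real.log_lt_log (div_pos hqs hlpos) hkey
      have hlogflip : Real.log ((s - η * Real.cos ψ) / (η * Real.cos ψ + s)) =
          - Real.log ((η * Real.cos ψ + s) / (s - η * Real.cos ψ)) := by
        rw [← Real.log_inv, inv_div]
      have hlognn : 0 ≤ Real.log ((η * Real.cos ψ + s) / (s - η * Real.cos ψ)) := by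
        apply Real.log_nonneg
        rw [le_div_iff₀ hlpos]
        linarith [mul_nonneg hη0 hcos]
      have habs : |b * Real.log ((s - η * Real.cos ψ) / (η * Real.cos ψ + s))| < π/2 := by
        rw [abs_mul, hlogflip, abs_neg, abs_of_nonneg hlognn]
        rcases eq_or_ne b 0 with hb0 | hb0
        · simpa [hb0] using hpi2
        · have hbpos : 0 < |b| := abs_pos.mpr hb0
          calc |b| * Real.log ((η * Real.cos ψ + s) / (s - η * Real.cos ψ))
              < |b| * Real.log ((ρ + δE)/(ρ - δE)) :=
                (mul_lt_mul_of_pos_left hlogle hbpos)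
            _ ≤ π/2 := hb
      exact habs
  · exact hpi2
end

section
/- Monotonicity of ln(q/l): Fix 0 < η < ρ and let x have |x| = η. For ψ ∈ [0, π/2], with q(ψ) ≥ l(ψ) the two chord distances from x to S^k(ρ) along the direction at angle ψ to ray(xO), the ratio q(ψ)/l(ψ) is nonincreasing in ψ, with q(0)/l(0) = (ρ+η)/(ρ−η) and q(π/2)/l(π/2) = 1; consequently max_{ψ ∈ [0,π/2]} ln(q/l) = ln((ρ+η)/(ρ−η)), which is the hyperbolic distance r(η)/ρ in the ball model of curvature −1/ρ². -/
open Real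

/-- Monotonicity of `ln(q/l)`: fix `0 < η < ρ` and for `ψ ∈ [0, π/2]` let
`q(ψ) = η cos ψ + √(ρ² − η² sin² ψ)` and `l(ψ) = √(ρ² − η² sin² ψ) − η cos ψ` be the two
chord distances from a point at distance `η` from the origin to the sphere `S^k(ρ)`.
Then `q/l` is nonincreasing on `[0, π/2]`, `q(0)/l(0) = (ρ+η)/(ρ−η)`,
`q(π/2)/l(π/2) = 1`, and `max ln(q/l) = ln((ρ+η)/(ρ−η)) = r(η)/ρ`, where
`r(η) = ρ ln((ρ+η)/(ρ−η))` is the hyperbolic distance from the origin in the ball model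
of curvature `−1/ρ²`. -/
theorem stmt19 (ρ η : ℝ) (hη : 0 < η) (hηρ : η < ρ) :
    let Q : ℝ → ℝ := fun ψ =>
      (η * Real.cos ψ + Real.sqrt (ρ^2 - η^2 * Real.sin ψ^2)) /
      (Real.sqrt (ρ^2 - η^2 * Real.sin ψ^2) - η * Real.cos ψ)
    AntitoneOn Q (Set.Icc 0 (π/2)) ∧
    Q 0 = (ρ + η)/(ρ - η) ∧
    Q (π/2) = 1 ∧
    (∀ ψ ∈ Set.Icc 0 (π/2),
      Real.log (Q ψ) ≤ (ρ * Real.log ((ρ + η)/(ρ - η))) / ρ) ∧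
    Real.log (Q 0) = (ρ * Real.log ((ρ + η)/(ρ - η))) / ρ := by
  intro Q
  have hρ : 0 < ρ := hη.trans hηρ
  have hd : 0 < ρ^2 - η^2 := by nlinarith
  -- basic facts on Icc
  have key : ∀ ψ ∈ Set.Icc 0 (π/2),
      0 ≤ η * Real.cos ψ ∧
      Real.sqrt (ρ^2 - η^2 * Real.sin ψ^2) ^ 2 = ρ^2 - η^2 * Real.sin ψ^2 ∧
      η * Real.cos ψ < Real.sqrt (ρ^2 - η^2 * Real.sin ψ^2) := by
    intro ψ hψ
    have hc : 0 ≤ Real.cos ψ := Real.cos_nonneg_of_mem_Icc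
      ⟨by linarith [hψ.1, Real.pi_pos], hψ.2⟩
    have hsin : Real.sin ψ ^ 2 ≤ 1 := Real.sin_sq_le_one ψ
    have harg : 0 < ρ^2 - η^2 * Real.sin ψ^2 := by nlinarith
    have hs2 : Real.sqrt (ρ^2 - η^2 * Real.sin ψ^2) ^ 2 = ρ^2 - η^2 * Real.sin ψ^2 :=
      Real.sq_sqrt harg.le
    have hspos : 0 < Real.sqrt (ρ^2 - η^2 * Real.sin ψ^2) := Real.sqrt_pos.mpr harg
    have hc0 : 0 ≤ η * Real.cos ψ := mul_nonneg hη.le hc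
    refine ⟨hc0, hs2, ?_⟩
    have hsc : (η * Real.cos ψ)^2 < Real.sqrt (ρ^2 - η^2 * Real.sin ψ^2) ^ 2 := by
      have hpyth := Real.sin_sq_add_cos_sq ψ
      rw [hs2]; nlinarith
    nlinarith
  -- rewrite Q as a square over a positive constant
  have hQform : ∀ ψ ∈ Set.Icc 0 (π/2),
      Q ψ = (η * Real.cos ψ + Real.sqrt (ρ^2 - η^2 * Real.sin ψ^2))^2 / (ρ^2 - η^2) := by
    intro ψ hψ
    obtain ⟨hc0, hs2, hsc⟩ := key ψ hψ
    have hpyth := Real.sin_sq_add_cos_sq ψ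
    have hdiff : Real.sqrt (ρ^2 - η^2 * Real.sin ψ^2) ^ 2 - (η * Real.cos ψ)^2 = ρ^2 - η^2 := by
      rw [hs2]; nlinarith
    have hne : Real.sqrt (ρ^2 - η^2 * Real.sin ψ^2) - η * Real.cos ψ ≠ 0 :=
      (sub_pos.mpr hsc).ne'
    show (η * Real.cos ψ + Real.sqrt (ρ^2 - η^2 * Real.sin ψ^2)) /
      (Real.sqrt (ρ^2 - η^2 * Real.sin ψ^2) - η * Real.cos ψ) = _
    rw [div_eq_div_iff hne hd.ne']
    linear_combination (-(η * Real.cos ψ + Real.sqrt (ρ^2 - η^2 * Real.sin ψ^2))) * hdiff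
  have hsum : ∀ ψ ∈ Set.Icc 0 (π/2),
      0 < η * Real.cos ψ + Real.sqrt (ρ^2 - η^2 * Real.sin ψ^2) := by
    intro ψ hψ
    obtain ⟨hc0, _, hsc⟩ := key ψ hψ
    linarith
  have hQpos : ∀ ψ ∈ Set.Icc 0 (π/2), 0 < Q ψ := by
    intro ψ hψ
    rw [hQform ψ hψ]
    exact div_pos (pow_pos (hsum ψ hψ) 2) hd
  -- antitone
  have hanti : AntitoneOn Q (Set.Icc 0 (π/2)) := by
    intro ψ1 h1 ψ2 h2 h12
    rw [hQform ψ1 h1, hQform ψ2 h2]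
    have hsums : η * Real.cos ψ2 + Real.sqrt (ρ^2 - η^2 * Real.sin ψ2^2)
        ≤ η * Real.cos ψ1 + Real.sqrt (ρ^2 - η^2 * Real.sin ψ1^2) := by
      have hcos : Real.cos ψ2 ≤ Real.cos ψ1 :=
        Real.cos_le_cos_of_nonneg_of_le_pi h1.1 (by linarith [h2.2, Real.pi_pos]) h12
      have hsinmono : Real.sin ψ1 ≤ Real.sin ψ2 :=
        Real.strictMonoOn_sin.monotoneOn
          ⟨by linarith [h1.1, Real.pi_pos], h1.2⟩
          ⟨by linarith [h2.1, Real.pi_pos], h2.2⟩ h12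
      have hsin1 : 0 ≤ Real.sin ψ1 :=
        Real.sin_nonneg_of_nonneg_of_le_pi h1.1 (by linarith [h1.2, Real.pi_pos])
      have hsq : Real.sin ψ1 ^ 2 ≤ Real.sin ψ2 ^ 2 := by nlinarith
      have hsqrt : Real.sqrt (ρ^2 - η^2 * Real.sin ψ2^2)
          ≤ Real.sqrt (ρ^2 - η^2 * Real.sin ψ1^2) :=
        Real.sqrt_le_sqrt (by nlinarith)
      have : η * Real.cos ψ2 ≤ η * Real.cos ψ1 :=
        mul_le_mul_of_nonneg_left hcos hη.le
      linarith
    have h2pos := hsum ψ2 h2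
    exact div_le_div_of_nonneg_right (pow_le_pow_left₀ h2pos.le hsums 2) hd.le
  -- endpoint values
  have hQ0 : Q 0 = (ρ + η)/(ρ - η) := by
    show (η * Real.cos 0 + Real.sqrt (ρ^2 - η^2 * Real.sin 0^2)) /
      (Real.sqrt (ρ^2 - η^2 * Real.sin 0^2) - η * Real.cos 0) = _
    have : Real.sqrt (ρ^2 - η^2 * Real.sin 0^2) = ρ := by
      simp [Real.sin_zero, Real.sqrt_sq hρ.le]
    rw [this]
    rw [Real.cos_zero]
    ring_nf
  have hQhalf : Q (π/2) = 1 := by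
    show (η * Real.cos (π/2) + Real.sqrt (ρ^2 - η^2 * Real.sin (π/2)^2)) /
      (Real.sqrt (ρ^2 - η^2 * Real.sin (π/2)^2) - η * Real.cos (π/2)) = 1
    rw [Real.cos_pi_div_two, Real.sin_pi_div_two]
    simp only [mul_zero, zero_add, sub_zero, one_pow, mul_one]
    exact div_self (by positivity)
  have h0mem : (0:ℝ) ∈ Set.Icc 0 (π/2) := ⟨le_refl 0, by positivity⟩
  have hRHS : (ρ * Real.log ((ρ + η)/(ρ - η))) / ρ = Real.log ((ρ + η)/(ρ - η)) := by
    field_simp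
  refine ⟨hanti, hQ0, hQhalf, ?_, ?_⟩
  · intro ψ hψ
    rw [hRHS, ← hQ0]
    exact Real.log_le_log (hQpos ψ hψ) (hanti h0mem hψ hψ.1)
  · rw [hRHS, hQ0]
end
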